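/- arXiv:math/0608384 — 7 statements merged into one kernel-verified Lean document; each statement's English description precedes it below -/
import Mathlib

section
/- Let B be a spil and F ≠ G two prime ≺-filters on B. Then there is a ∈ B such that either a ∈ F and a' ∈ G, or a' ∈ F and a ∈ G. -/
/-- A strong proximity involution lattice (spil), stated unbundled:
`sup`, `inf` a bounded distributive lattice structure, `inv` an involution,
`prec` the proximity relation. Finite joins/meets are via list folds
(empty join is `bot`, empty meet is `top`). -/
structure IsSpil {B : Type*} (sup inf : B → B → B) (inv : B → B) (bot top : B)
    (prec : B → B → Prop) : Prop where
  sup_comm : ∀ a b, sup a b = sup b a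
  sup_assoc : ∀ a b c, sup (sup a b) c = sup a (sup b c)
  inf_comm : ∀ a b, inf a b = inf b a
  inf_assoc : ∀ a b c, inf (inf a b) c = inf a (inf b c)
  sup_inf_absorb : ∀ a b, sup a (inf a b) = a
  inf_sup_absorb : ∀ a b, inf a (sup a b) = a
  inf_sup_distrib : ∀ a b c, inf a (sup b c) = sup (inf a b) (inf a c)
  bot_sup : ∀ a, sup bot a = a
  top_inf : ∀ a, inf top a = a
  prec_trans : ∀ a b c, prec a b → prec b c → prec a c
  prec_interpolate : ∀ a c, prec a c → ∃ b, prec a b ∧ prec b c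
  join_prec : ∀ (M : List B) (a : B), (∀ m ∈ M, prec m a) ↔ prec (M.foldr sup bot) a
  prec_meet : ∀ (M : List B) (a : B), (∀ m ∈ M, prec a m) ↔ prec a (M.foldr inf top)
  inv_inv : ∀ x, inv (inv x) = x
  exchange : ∀ x y z, prec (inf x y) z ↔ prec x (sup z (inv y))
  inv_sup : ∀ x y, inv (sup x y) = inf (inv x) (inv y)
  inv_inf : ∀ x y, inv (inf x y) = sup (inv x) (inv y)
  prec_bot : ∀ x y, prec x (inf y (inv y)) → prec x bot

/-- `↑A = {x : ∃ a ∈ A, a ≺ x}`. -/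
def upSet {B : Type*} (prec : B → B → Prop) (A : Set B) : Set B :=
  {x | ∃ a ∈ A, prec a x}

/-- A `≺`-filter: nonempty, closed under binary meets, and `F = ↑F`. -/
def IsPrecFilter {B : Type*} (inf : B → B → B) (prec : B → B → Prop) (F : Set B) : Prop :=
  F.Nonempty ∧ (∀ a ∈ F, ∀ b ∈ F, inf a b ∈ F) ∧ F = upSet prec F

/-- A prime `≺`-filter: every finite join in `F` has a joinand in `F`. -/
def IsPrimePrecFilter {B : Type*} (sup inf : B → B → B) (bot : B)
    (prec : B → B → Prop) (F : Set B) : Prop :=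
  IsPrecFilter inf prec F ∧ ∀ M : List B, M.foldr sup bot ∈ F → ∃ a ∈ M, a ∈ F
variable {B : Type*} {sup inf : B → B → B} {inv : B → B} {bot top : B}
  {prec : B → B → Prop}

theorem stmt11 (h : IsSpil sup inf inv bot top prec) (F G : Set B)
    (hF : IsPrimePrecFilter sup inf bot prec F)
    (hG : IsPrimePrecFilter sup inf bot prec G) (hne : F ≠ G) :
    ∃ a : B, (a ∈ F ∧ inv a ∈ G) ∨ (inv a ∈ F ∧ a ∈ G) := by
  have key : ∀ F G : Set B, IsPrimePrecFilter sup inf bot prec F →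
      IsPrimePrecFilter sup inf bot prec G → ∀ x ∈ F, x ∉ G →
      ∃ b, b ∈ F ∧ inv b ∈ G := by
    intro F G hF hG x hxF hxG
    obtain ⟨⟨hFne, hFmeet, hFup⟩, hFprime⟩ := hF
    obtain ⟨⟨hGne, hGmeet, hGup⟩, hGprime⟩ := hG
    have hx' : x ∈ upSet prec F := by rw [← hFup]; exact hxF
    obtain ⟨b, hbF, hbx⟩ := hx'
    obtain ⟨g, hgG⟩ := hGne
    have hgtop : prec g top := (h.prec_meet [] g).mp (by simp)
    have htopG : top ∈ G := by rw [hGup]; exact ⟨g, hgG, hgtop⟩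
    have h2 : prec top (sup x (inv b)) :=
      (h.exchange top b x).mp (by rwa [h.top_inf])
    have h3 : sup x (inv b) ∈ G := by rw [hGup]; exact ⟨top, htopG, h2⟩
    have h4 : ([x, inv b].foldr sup bot) ∈ G := by
      simp only [List.foldr]
      rw [h.sup_comm (inv b) bot, h.bot_sup]; exact h3
    obtain ⟨a, ha, haG⟩ := hGprime [x, inv b] h4
    simp only [List.mem_cons, List.mem_singleton, List.not_mem_nil, or_false] at ha
    rcases ha with rfl | rfl
    · exact absurd haG hxG
    · exact ⟨b, hbF, haG⟩
  by_cases hsub : F ⊆ G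
  · have hex : ∃ x ∈ G, x ∉ F := by
      by_contra hc
      push_neg at hc
      exact hne (Set.Subset.antisymm hsub hc)
    obtain ⟨x, hxG, hxF⟩ := hex
    obtain ⟨b, hbG, hbF⟩ := key G F hG hF x hxG hxF
    exact ⟨inv b, Or.inl ⟨hbF, by rwa [h.inv_inv]⟩⟩
  · obtain ⟨x, hxF, hxG⟩ := Set.not_subset.mp hsub
    obtain ⟨b, hbF, hbG⟩ := key F G hF hG x hxF hxG
    exact ⟨b, Or.inl ⟨hbF, hbG⟩⟩
end

section
/- For every spil B, the space spec(B) of prime ≺-filters, with topology generated by the sets O_x = {F : x ∈ F}, is Hausdorff. -/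
variable {B : Type*} {sup inf : B → B → B} {inv : B → B} {bot top : B}
  {prec : B → B → Prop}

section Aux
variable {B : Type*} {sup inf : B → B → B} {inv : B → B} {bot top : B}
  {prec : B → B → Prop}
variable (h : IsSpil sup inf inv bot top prec)
include h

lemma spil_prec_top (a : B) : prec a top := by
  have := (h.prec_meet [] a).mp (by simp)
  simpa using this

lemma spil_mem_of_prec {F : Set B} (hF : IsPrecFilter inf prec F) {a b : B}
    (ha : a ∈ F) (hab : prec a b) : b ∈ F := by
  rw [hF.2.2]; exact ⟨a, ha, hab⟩

lemma spil_top_mem {F : Set B} (hF : IsPrecFilter inf prec F) : top ∈ F := by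
  obtain ⟨c, hc⟩ := hF.1
  exact spil_mem_of_prec h hF hc (spil_prec_top h c)

lemma spil_bot_not_mem {F : Set B} (hF : IsPrimePrecFilter sup inf bot prec F) : bot ∉ F := by
  intro hb
  obtain ⟨a, ha, _⟩ := hF.2 [] (by simpa using hb)
  simp at ha

lemma spil_prime_pair {F : Set B} (hF : IsPrimePrecFilter sup inf bot prec F) {x y : B}
    (hxy : sup x y ∈ F) : x ∈ F ∨ y ∈ F := by
  have : ([x, y] : List B).foldr sup bot ∈ F := by
    simp only [List.foldr]
    rw [h.sup_comm y bot, h.bot_sup]; exact hxy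
  obtain ⟨a, ha, haF⟩ := hF.2 _ this
  simp only [List.mem_cons, List.not_mem_nil, or_false] at ha
  rcases ha with rfl | rfl
  · exact Or.inl haF
  · exact Or.inr haF

lemma spil_sep {F G : Set B} (hF : IsPrimePrecFilter sup inf bot prec F)
    (hG : IsPrimePrecFilter sup inf bot prec G) {x : B} (hxF : x ∈ F) (hxG : x ∉ G) :
    ∃ b, b ∈ F ∧ inv b ∈ G := by
  rw [hF.1.2.2] at hxF
  obtain ⟨a, haF, hax⟩ := hxF
  obtain ⟨b, hab, hbx⟩ := h.prec_interpolate a x hax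
  refine ⟨b, spil_mem_of_prec h hF.1 haF hab, ?_⟩
  have htop : prec top (sup x (inv b)) := by
    have := (h.exchange top b x).mp (by rwa [h.top_inf])
    exact this
  have : sup x (inv b) ∈ G := spil_mem_of_prec h hG.1 (spil_top_mem h hG.1) htop
  rcases spil_prime_pair h hG this with hx | hb
  · exact absurd hx hxG
  · exact hb

lemma spil_not_both {H : Set B} (hH : IsPrimePrecFilter sup inf bot prec H) {b : B}
    (h1 : b ∈ H) (h2 : inv b ∈ H) : False := by
  have hm : inf b (inv b) ∈ H := hH.1.2.1 b h1 (inv b) h2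
  rw [hH.1.2.2] at hm
  obtain ⟨e, heH, he⟩ := hm
  exact spil_bot_not_mem h hH (spil_mem_of_prec h hH.1 heH (h.prec_bot e b he))

end Aux

theorem stmt14 (h : IsSpil sup inf inv bot top prec) :
    @T2Space {F : Set B // IsPrimePrecFilter sup inf bot prec F}
      (TopologicalSpace.generateFrom
        {S | ∃ x : B, S = {F : {F : Set B // IsPrimePrecFilter sup inf bot prec F} | x ∈ F.1}}) := by
  set X := {F : Set B // IsPrimePrecFilter sup inf bot prec F}
  set g : Set (Set X) := {S | ∃ x : B, S = {F : X | x ∈ F.1}}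
  letI t : TopologicalSpace X := TopologicalSpace.generateFrom g
  refine ⟨fun {F G} hFG => ?_⟩
  have key : ∀ F G : X, (∃ x, x ∈ F.1 ∧ x ∉ G.1) →
      ∃ u v : Set X, IsOpen u ∧ IsOpen v ∧ F ∈ u ∧ G ∈ v ∧ Disjoint u v := by
    rintro F G ⟨x, hxF, hxG⟩
    obtain ⟨b, hbF, hbG⟩ := spil_sep h F.2 G.2 hxF hxG
    refine ⟨{H : X | b ∈ H.1}, {H : X | inv b ∈ H.1}, ?_, ?_, hbF, hbG, ?_⟩
    · exact TopologicalSpace.isOpen_generateFrom_of_mem ⟨b, rfl⟩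
    · exact TopologicalSpace.isOpen_generateFrom_of_mem ⟨inv b, rfl⟩
    · rw [Set.disjoint_left]
      intro H h1 h2
      exact spil_not_both h H.2 h1 h2
  by_cases hc : ∃ x, x ∈ F.1 ∧ x ∉ G.1
  · exact key F G hc
  · push_neg at hc
    have : ∃ x, x ∈ G.1 ∧ x ∉ F.1 := by
      by_contra hc2
      simp only [not_exists, not_and, not_not] at hc2
      exact hFG (Subtype.ext (Set.Subset.antisymm hc hc2))
    obtain ⟨u, v, hu, hv, hGu, hFv, hd⟩ := key G F this
    exact ⟨v, u, hv, hu, hFv, hGu, hd.symm⟩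
end

section
/- For every spil B, the space spec(B) of prime ≺-filters with the topology generated by the sets O_x = {F : x ∈ F} is compact. -/
variable {B : Type*} {sup inf : B → B → B} {inv : B → B} {bot top : B}
  {prec : B → B → Prop}

/-!
By Alexander's subbasis theorem it suffices to refine covers by basic opens `O_x`, `x ∈ X`.
If `top` is not `≺` a finite join of elements of `X`, Zorn's lemma gives a `≺`-filter maximal
among those avoiding every element `≺` such a join; by the cut rule
`f ∧ t ≺ s, f ≺ t ⊢ f ≺ s` it is prime, and it avoids `X`, so `X` does not cover.
Hence `top ≺ ⋁ M` for a finite `M ⊆ X`; every `≺`-filter contains `top`, hence `⋁ M`,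
and by primality some `m ∈ M`: the `O_m` form a finite subcover.
-/

namespace IsSpil

variable (h : IsSpil sup inf inv bot top prec)
include h

@[reducible]
def distribLattice : DistribLattice B :=
  letI : Max B := ⟨sup⟩
  letI : Min B := ⟨inf⟩
  letI : Lattice B := Lattice.mk' h.sup_comm h.sup_assoc h.inf_comm h.inf_assoc
    h.sup_inf_absorb h.inf_sup_absorb
  DistribLattice.ofInfSupLe fun a b c => le_of_eq (h.inf_sup_distrib a b c)

theorem sup_bot (a : B) : sup a bot = a := (h.sup_comm a bot).trans (h.bot_sup a)

theorem inf_top (a : B) : inf a top = a := (h.inf_comm a top).trans (h.top_inf a)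

theorem prec_top (a : B) : prec a top := (h.prec_meet [] a).1 (by simp)

theorem sup_prec {a b z : B} (ha : prec a z) (hb : prec b z) : prec (sup a b) z := by
  simpa [h.sup_bot] using (h.join_prec [a, b] z).1 (by simp [ha, hb])

theorem prec_inf {x a b : B} (ha : prec x a) (hb : prec x b) : prec x (inf a b) := by
  simpa [h.inf_top] using (h.prec_meet [a, b] x).1 (by simp [ha, hb])

theorem prec_of_le_of_prec {u v z : B} (huv : letI := h.distribLattice; u ≤ v)
    (hp : prec v z) : prec u z := by
  let _ := h.distribLattice
  have huv : sup u v = v := sup_eq_right.2 huv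
  have hvz : prec ([u, v].foldr sup bot) z := by simpa [h.sup_bot, huv] using hp
  exact (h.join_prec [u, v] z).2 hvz u (by simp)

theorem prec_of_prec_of_le {x z w : B} (hp : prec x z) (hzw : letI := h.distribLattice; z ≤ w) :
    prec x w := by
  let _ := h.distribLattice
  have hzw : inf w z = z := inf_eq_right.2 hzw
  have hxz : prec x ([w, z].foldr inf top) := by simpa [h.inf_top, hzw] using hp
  exact (h.prec_meet [w, z] x).2 hxz w (by simp)

theorem inv_prec_inv {x y : B} (hp : prec x y) : prec (inv y) (inv x) := by
  have hx : prec x (sup bot (inv (inv y))) := by rwa [h.inv_inv, h.bot_sup]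
  have hxy : prec (inf (inv y) x) bot := by
    rw [h.inf_comm]; exact (h.exchange x (inv y) bot).2 hx
  simpa [h.bot_sup] using (h.exchange (inv y) x bot).1 hxy

theorem exists_prec_of_prec_sup_left {a b c : B} (hp : prec a (sup b c)) :
    ∃ b₀, prec b₀ b ∧ prec a (sup b₀ c) := by
  have hinv : prec (inf (inv b) (inv c)) (inv a) := h.inv_sup b c ▸ h.inv_prec_inv hp
  rw [h.exchange, h.inv_inv] at hinv
  obtain ⟨v, hbv, hva⟩ := h.prec_interpolate _ _ hinv
  refine ⟨inv v, by simpa [h.inv_inv] using h.inv_prec_inv hbv, ?_⟩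
  have hvc : prec (inf v (inv c)) (inv a) := by rwa [h.exchange, h.inv_inv]
  simpa [h.inv_inv, h.inv_inf] using h.inv_prec_inv hvc

theorem exists_prec_of_prec_sup {a b c : B} (hp : prec a (sup b c)) :
    ∃ b₀ c₀, prec b₀ b ∧ prec c₀ c ∧ prec a (sup b₀ c₀) := by
  obtain ⟨b₀, hb, hp⟩ := h.exists_prec_of_prec_sup_left hp
  rw [h.sup_comm] at hp
  obtain ⟨c₀, hc, hp⟩ := h.exists_prec_of_prec_sup_left hp
  exact ⟨b₀, c₀, hb, hc, h.sup_comm c₀ b₀ ▸ hp⟩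

theorem prec_of_prec_sup_inf_inv {f s y : B} (hp : prec f (sup s (inf y (inv y)))) :
    prec f s := by
  let _ := h.distribLattice
  obtain ⟨s₀, d₀, hs, hd, hp⟩ := h.exists_prec_of_prec_sup hp
  have hds : prec d₀ s := h.prec_of_prec_of_le (h.prec_bot d₀ y hd) (sup_eq_right.1 (h.bot_sup s))
  exact h.prec_trans _ _ _ hp (h.sup_prec hs hds)

/-- `f ≺ (s ∨ t') ∧ t ≤ s ∨ (t ∧ t')`, and the contradiction `t ∧ t'` can be cut. -/
theorem prec_of_prec_inf {f t s : B} (hfts : prec (inf f t) s) (hft : prec f t) : prec f s := by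
  let _ := h.distribLattice
  have hf : prec f (inf (sup s (inv t)) t) := h.prec_inf ((h.exchange f t s).1 hfts) hft
  refine h.prec_of_prec_sup_inf_inv (y := t) (h.prec_of_prec_of_le hf ?_)
  change (s ⊔ inv t) ⊓ t ≤ s ⊔ t ⊓ inv t
  rw [inf_sup_right]
  exact sup_le_sup inf_le_left (_root_.inf_comm (inv t) t).le

theorem foldr_sup_append (M N : List B) :
    (M ++ N).foldr sup bot = sup (M.foldr sup bot) (N.foldr sup bot) := by
  induction M with
  | nil => simp [h.bot_sup]
  | cons m M ih => simp only [List.cons_append, List.foldr_cons, ih, h.sup_assoc]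

end IsSpil

namespace IsPrecFilter

variable {F : Set B}

theorem mem_of_prec (hF : IsPrecFilter inf prec F) {a y : B} (ha : a ∈ F) (hay : prec a y) :
    y ∈ F := by
  rw [hF.2.2]; exact ⟨a, ha, hay⟩

theorem exists_prec_of_mem (hF : IsPrecFilter inf prec F) {y : B} (hy : y ∈ F) :
    ∃ a ∈ F, prec a y := by
  rw [hF.2.2] at hy; exact hy

theorem top_mem (h : IsSpil sup inf inv bot top prec) (hF : IsPrecFilter inf prec F) : top ∈ F :=
  let ⟨a, ha⟩ := hF.1
  hF.mem_of_prec ha (h.prec_top a)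

theorem sUnion_of_isChain {c : Set (Set B)} (hc : ∀ F ∈ c, IsPrecFilter inf prec F)
    (hchain : IsChain (· ⊆ ·) c) (hne : c.Nonempty) : IsPrecFilter inf prec (⋃₀ c) := by
  refine ⟨?_, ?_, ?_⟩
  · obtain ⟨F, hF⟩ := hne
    obtain ⟨a, ha⟩ := (hc F hF).1
    exact ⟨a, F, hF, ha⟩
  · rintro a ⟨Fa, hFa, ha⟩ b ⟨Fb, hFb, hb⟩
    rcases hchain.total hFa hFb with hsub | hsub
    · exact ⟨Fb, hFb, (hc Fb hFb).2.1 a (hsub ha) b hb⟩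
    · exact ⟨Fa, hFa, (hc Fa hFa).2.1 a ha b (hsub hb)⟩
  · ext y
    constructor
    · rintro ⟨F, hF, hy⟩
      obtain ⟨a, ha, hay⟩ := (hc F hF).exists_prec_of_mem hy
      exact ⟨a, ⟨F, hF, ha⟩, hay⟩
    · rintro ⟨a, ⟨F, hF, ha⟩, hay⟩
      exact ⟨F, hF, (hc F hF).mem_of_prec ha hay⟩

theorem isPrimePrecFilter (hF : IsPrecFilter inf prec F) (hbot : bot ∉ F)
    (hsup : ∀ a b, sup a b ∈ F → a ∈ F ∨ b ∈ F) : IsPrimePrecFilter sup inf bot prec F := by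
  refine ⟨hF, fun M hM => ?_⟩
  induction M with
  | nil => exact absurd hM hbot
  | cons m M ih =>
    rcases hsup m _ hM with hm | hM
    · exact ⟨m, List.mem_cons_self, hm⟩
    · obtain ⟨a, haM, ha⟩ := ih hM
      exact ⟨a, List.mem_cons_of_mem m haM, ha⟩

end IsPrecFilter

namespace IsSpil

variable (h : IsSpil sup inf inv bot top prec)
include h

theorem upSet_upSet (A : Set B) : upSet prec (upSet prec A) = upSet prec A := by
  ext z
  constructor
  · rintro ⟨y, ⟨a, ha, hay⟩, hyz⟩
    exact ⟨a, ha, h.prec_trans _ _ _ hay hyz⟩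
  · rintro ⟨a, ha, haz⟩
    obtain ⟨y, hay, hyz⟩ := h.prec_interpolate _ _ haz
    exact ⟨y, ⟨a, ha, hay⟩, hyz⟩

theorem isPrecFilter_upSet {A : Set B} (hne : A.Nonempty)
    (hinf : ∀ a ∈ A, ∀ b ∈ A, inf a b ∈ A) : IsPrecFilter inf prec (upSet prec A) := by
  let _ := h.distribLattice
  refine ⟨?_, ?_, (h.upSet_upSet A).symm⟩
  · obtain ⟨a, ha⟩ := hne
    exact ⟨top, a, ha, h.prec_top a⟩
  · rintro y ⟨a, ha, hay⟩ z ⟨b, hb, hbz⟩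
    exact ⟨inf a b, hinf a ha b hb, h.prec_inf (h.prec_of_le_of_prec inf_le_left hay)
      (h.prec_of_le_of_prec inf_le_right hbz)⟩

theorem isPrecFilter_upSet_image_inf {F : Set B} (hF : IsPrecFilter inf prec F) (y : B) :
    IsPrecFilter inf prec (upSet prec ((inf · y) '' F)) := by
  let _ := h.distribLattice
  refine h.isPrecFilter_upSet (hF.1.image _) ?_
  rintro _ ⟨a, ha, rfl⟩ _ ⟨b, hb, rfl⟩
  exact ⟨inf a b, hF.2.1 a ha b hb, inf_inf_distrib_right a b y⟩

theorem subset_upSet_image_inf {F : Set B} (hF : IsPrecFilter inf prec F) (y : B) :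
    F ⊆ upSet prec ((inf · y) '' F) := by
  let _ := h.distribLattice
  intro f hf
  obtain ⟨a, ha, haf⟩ := hF.exists_prec_of_mem hf
  exact ⟨inf a y, ⟨a, ha, rfl⟩, h.prec_of_le_of_prec inf_le_left haf⟩

end IsSpil

def belowJoins (sup : B → B → B) (bot : B) (prec : B → B → Prop) (X : Set B) : Set B :=
  {y | ∃ M : List B, (∀ m ∈ M, m ∈ X) ∧ prec y (M.foldr sup bot)}

namespace IsSpil

variable (h : IsSpil sup inf inv bot top prec)
include h

theorem mem_belowJoins_of_prec {X : Set B} {y z : B} (hyz : prec y z)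
    (hz : z ∈ belowJoins sup bot prec X) : y ∈ belowJoins sup bot prec X :=
  let ⟨M, hMX, hzM⟩ := hz
  ⟨M, hMX, h.prec_trans _ _ _ hyz hzM⟩

theorem mem_belowJoins_of_le {X : Set B} {y z : B} (hyz : letI := h.distribLattice; y ≤ z)
    (hz : z ∈ belowJoins sup bot prec X) : y ∈ belowJoins sup bot prec X :=
  let ⟨M, hMX, hzM⟩ := hz
  ⟨M, hMX, h.prec_of_le_of_prec hyz hzM⟩

theorem mem_belowJoins_of_prec_sup {X : Set B} {f a b : B}
    (ha : inf f a ∈ belowJoins sup bot prec X) (hb : inf f b ∈ belowJoins sup bot prec X)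
    (hf : prec f (sup a b)) : f ∈ belowJoins sup bot prec X := by
  let _ := h.distribLattice
  obtain ⟨M, hMX, haM⟩ := ha
  obtain ⟨N, hNX, hbN⟩ := hb
  refine ⟨M ++ N, fun m hm => (List.mem_append.1 hm).elim (hMX m) (hNX m), ?_⟩
  rw [h.foldr_sup_append]
  refine h.prec_of_prec_inf ?_ hf
  rw [h.inf_sup_distrib]
  exact h.sup_prec (h.prec_of_prec_of_le haM le_sup_left) (h.prec_of_prec_of_le hbN le_sup_right)

theorem exists_maximal_isPrecFilter_disjoint {I : Set B} (htop : top ∉ I)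
    (hI : ∀ y z, prec y z → z ∈ I → y ∈ I) :
    ∃ F, Maximal (fun F => IsPrecFilter inf prec F ∧ Disjoint F I) F := by
  have hstart : IsPrecFilter inf prec (upSet prec {top}) ∧ Disjoint (upSet prec {top}) I := by
    refine ⟨h.isPrecFilter_upSet (Set.singleton_nonempty top) ?_, ?_⟩
    · rintro _ rfl _ rfl
      exact h.top_inf _
    · rw [Set.disjoint_left]
      rintro y ⟨_, rfl, hy⟩ hyI
      exact htop (hI _ _ hy hyI)
  obtain ⟨F, -, hF⟩ := zorn_subset_nonempty {F | IsPrecFilter inf prec F ∧ Disjoint F I}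
    (fun c hc hchain hne => ⟨⋃₀ c,
      ⟨IsPrecFilter.sUnion_of_isChain (fun F hF => (hc hF).1) hchain hne,
        Set.disjoint_sUnion_left.2 fun F hF => (hc hF).2⟩,
      fun _ => Set.subset_sUnion_of_mem⟩) _ hstart
  exact ⟨F, hF⟩

section Maximal

variable {I F : Set B} (hI : ∀ y z, prec y z → z ∈ I → y ∈ I)
  (hF : Maximal (fun F => IsPrecFilter inf prec F ∧ Disjoint F I) F)
include hI hF

theorem exists_inf_mem_of_maximal {y w : B} (hyw : prec y w) (hw : w ∉ F) :
    ∃ f ∈ F, inf f y ∈ I := by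
  let _ := h.distribLattice
  -- otherwise the `≺`-filter generated by `F ∪ {y}` still avoids `I`, so it is `F` and contains `w`
  by_contra! hyI
  have hG : IsPrecFilter inf prec (upSet prec ((inf · y) '' F)) ∧
      Disjoint (upSet prec ((inf · y) '' F)) I := by
    refine ⟨h.isPrecFilter_upSet_image_inf hF.1.1 y, Set.disjoint_left.2 ?_⟩
    rintro z ⟨_, ⟨f, hf, rfl⟩, hfz⟩ hz
    exact hyI f hf (hI _ _ hfz hz)
  obtain ⟨f, hf⟩ := hF.1.1.1
  exact hw (hF.2 hG (h.subset_upSet_image_inf hF.1.1 y)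
    ⟨inf f y, ⟨f, hf, rfl⟩, h.prec_of_le_of_prec inf_le_right hyw⟩)

end Maximal

theorem isPrimePrecFilter_of_maximal {X F : Set B}
    (hF : Maximal (fun F => IsPrecFilter inf prec F ∧ Disjoint F (belowJoins sup bot prec X)) F) :
    IsPrimePrecFilter sup inf bot prec F := by
  let _ := h.distribLattice
  have hI : ∀ y z, prec y z → z ∈ belowJoins sup bot prec X → y ∈ belowJoins sup bot prec X :=
    fun _ _ => h.mem_belowJoins_of_prec
  have hfil := hF.1.1
  have hdisj := Set.disjoint_left.1 hF.1.2
  refine hfil.isPrimePrecFilter (fun hbot => ?_) fun a b hab => ?_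
  · obtain ⟨f, hf, hfbot⟩ := hfil.exists_prec_of_mem hbot
    exact hdisj hf ⟨[], by simp, hfbot⟩
  · by_contra! hnot
    obtain ⟨g, hg, hgab⟩ := hfil.exists_prec_of_mem hab
    obtain ⟨a₀, b₀, ha₀, hb₀, hg₀⟩ := h.exists_prec_of_prec_sup hgab
    obtain ⟨f₁, hf₁, ha₀I⟩ := h.exists_inf_mem_of_maximal hI hF ha₀ hnot.1
    obtain ⟨f₂, hf₂, hb₀I⟩ := h.exists_inf_mem_of_maximal hI hF hb₀ hnot.2
    have hf : inf (inf f₁ f₂) g ∈ F := hfil.2.1 _ (hfil.2.1 _ hf₁ _ hf₂) _ hg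
    refine hdisj hf (h.mem_belowJoins_of_prec_sup ?_ ?_ (h.prec_of_le_of_prec inf_le_right hg₀))
    · exact h.mem_belowJoins_of_le (inf_le_inf_right a₀ (inf_le_left.trans inf_le_left)) ha₀I
    · exact h.mem_belowJoins_of_le (inf_le_inf_right b₀ (inf_le_left.trans inf_le_right)) hb₀I

theorem exists_isPrimePrecFilter_disjoint {X : Set B} (hX : top ∉ belowJoins sup bot prec X) :
    ∃ F, IsPrimePrecFilter sup inf bot prec F ∧ Disjoint F X := by
  obtain ⟨F, hF⟩ := h.exists_maximal_isPrecFilter_disjoint hX fun _ _ => h.mem_belowJoins_of_prec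
  refine ⟨F, h.isPrimePrecFilter_of_maximal hF, Set.disjoint_left.2 fun x hxF hxX => ?_⟩
  obtain ⟨a, ha, hax⟩ := hF.1.1.exists_prec_of_mem hxF
  exact Set.disjoint_left.1 hF.1.2 ha ⟨[x], by simpa using hxX, by simpa [h.sup_bot] using hax⟩

end IsSpil

theorem stmt15 (h : IsSpil sup inf inv bot top prec) :
    @CompactSpace {F : Set B // IsPrimePrecFilter sup inf bot prec F}
      (TopologicalSpace.generateFrom
        {S | ∃ x : B, S = {F : {F : Set B // IsPrimePrecFilter sup inf bot prec F} | x ∈ F.1}}) := by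
  refine compactSpace_generateFrom (T := TopologicalSpace.generateFrom _) rfl fun P hPS hP => ?_
  have hcover : top ∈ belowJoins sup bot prec {x | {F | x ∈ F.1} ∈ P} := by
    by_contra hX
    obtain ⟨F, hF, hFX⟩ := h.exists_isPrimePrecFilter_disjoint hX
    obtain ⟨S, hSP, hFS⟩ := Set.eq_univ_iff_forall.1 hP ⟨F, hF⟩
    obtain ⟨x, rfl⟩ := hPS hSP
    exact Set.disjoint_left.1 hFX hFS hSP
  obtain ⟨M, hMP, htopM⟩ := hcover
  refine ⟨(fun m => {F | m ∈ F.1}) '' {m | m ∈ M}, ?_, M.finite_toSet.image _, ?_⟩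
  · rintro _ ⟨m, hm, rfl⟩
    exact hMP m hm
  · refine Set.eq_univ_of_forall fun F => ?_
    obtain ⟨m, hm, hmF⟩ := F.2.2 M (F.2.1.mem_of_prec (F.2.1.top_mem h) htopM)
    exact ⟨_, ⟨m, hm, rfl⟩, hmF⟩
end

section
/- Let X be a compact Hausdorff space and B the set of pairs (O, K) with O open, K compact, and O ⊆ K, with operations (O₀,K₀)∨(O₁,K₁)=(O₀∪O₁, K₀∪K₁), (O₀,K₀)∧(O₁,K₁)=(O₀∩O₁, K₀∩K₁), involution (O,K)'=(X∖K, X∖O), 0=(∅,∅), 1=(X,X), and relation (O₀,K₀) ≺ (O₁,K₁) iff K₀ ⊆ O₁. Then B is a spil. -/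
/-- Pairs `(O, K)` with `O` open, `K` compact and `O ⊆ K`. -/
def OKPair (X : Type*) [TopologicalSpace X] : Type _ :=
  {s : Set X × Set X // IsOpen s.1 ∧ IsCompact s.2 ∧ s.1 ⊆ s.2}

variable {X : Type*} [TopologicalSpace X] [CompactSpace X] [T2Space X]

def okSup (p q : OKPair X) : OKPair X :=
  ⟨(p.1.1 ∪ q.1.1, p.1.2 ∪ q.1.2), p.2.1.union q.2.1, p.2.2.1.union q.2.2.1,
    Set.union_subset_union p.2.2.2 q.2.2.2⟩

def okInf (p q : OKPair X) : OKPair X :=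
  ⟨(p.1.1 ∩ q.1.1, p.1.2 ∩ q.1.2), p.2.1.inter q.2.1, p.2.2.1.inter q.2.2.1,
    Set.inter_subset_inter p.2.2.2 q.2.2.2⟩

def okInv (p : OKPair X) : OKPair X :=
  ⟨(p.1.2ᶜ, p.1.1ᶜ), p.2.2.1.isClosed.isOpen_compl,
    p.2.1.isClosed_compl.isCompact, Set.compl_subset_compl.2 p.2.2.2⟩

def okBot : OKPair X := ⟨(∅, ∅), isOpen_empty, isCompact_empty, subset_rfl⟩

def okTop : OKPair X := ⟨(Set.univ, Set.univ), isOpen_univ, isCompact_univ, subset_rfl⟩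

def okPrec (p q : OKPair X) : Prop := p.1.2 ⊆ q.1.1

/-!
Every law except interpolation is computed componentwise in `Set X × Set X`. Interpolation is
where the topology enters: given `K₀ ⊆ O₁` with `K₀` compact and `O₁` open, local compactness of
the compact Hausdorff space `X` yields a compact `L` with `K₀ ⊆ interior L` and `L ⊆ O₁`, and
`(interior L, L)` interpolates.
-/

omit [CompactSpace X] [T2Space X] in
theorem okPrec_trans {p q r : OKPair X} (hpq : okPrec p q) (hqr : okPrec q r) : okPrec p r :=
  hpq.trans (q.2.2.2.trans hqr)

omit [CompactSpace X] [T2Space X] in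
theorem exists_okPrec_between [LocallyCompactSpace X] {p r : OKPair X} (h : okPrec p r) :
    ∃ q, okPrec p q ∧ okPrec q r := by
  obtain ⟨L, hL, hpL, hLr⟩ := exists_compact_between p.2.2.1 r.2.1 h
  exact ⟨⟨(interior L, L), isOpen_interior, hL, interior_subset⟩, hpL, hLr⟩

omit [CompactSpace X] [T2Space X] in
theorem snd_foldr_okSup (M : List (OKPair X)) : (M.foldr okSup okBot).1.2 = ⋃ m ∈ M, m.1.2 := by
  induction M with
  | nil => simp only [List.foldr_nil, List.not_mem_nil, Set.iUnion_of_empty, Set.iUnion_empty]; rfl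
  | cons p M ih => simp [okSup, ih]

theorem fst_foldr_okInf (M : List (OKPair X)) : (M.foldr okInf okTop).1.1 = ⋂ m ∈ M, m.1.1 := by
  induction M with
  | nil => simp only [List.foldr_nil, List.not_mem_nil, Set.iInter_of_empty, Set.iInter_univ]; rfl
  | cons p M ih => simp [okInf, ih]

theorem okPrec_okInf_iff (x y z : OKPair X) :
    okPrec (okInf x y) z ↔ okPrec x (okSup z (okInv y)) :=
  Set.subset_union_compl_iff_inter_subset.symm

theorem fst_okInf_okInv_self (p : OKPair X) : (okInf p (okInv p)).1.1 = ∅ :=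
  Set.sdiff_eq_empty.mpr p.2.2.2

theorem stmt16 :
    IsSpil (okSup (X := X)) okInf okInv okBot okTop okPrec :=
  -- `okSup` and `okInf` are the lattice operations of `Set X × Set X` on the underlying pairs.
  { sup_comm a b := Subtype.ext (sup_comm a.1 b.1)
    sup_assoc a b c := Subtype.ext (sup_assoc a.1 b.1 c.1)
    inf_comm a b := Subtype.ext (inf_comm a.1 b.1)
    inf_assoc a b c := Subtype.ext (inf_assoc a.1 b.1 c.1)
    sup_inf_absorb a b := Subtype.ext (sup_inf_self (a := a.1) (b := b.1))
    inf_sup_absorb a b := Subtype.ext (inf_sup_self (a := a.1) (b := b.1))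
    inf_sup_distrib a b c := Subtype.ext (inf_sup_left a.1 b.1 c.1)
    bot_sup a := Subtype.ext (bot_sup_eq a.1)
    top_inf a := Subtype.ext (top_inf_eq a.1)
    prec_trans _ _ _ := okPrec_trans
    prec_interpolate _ _ := exists_okPrec_between
    join_prec M a := by simp only [okPrec, snd_foldr_okSup, Set.iUnion₂_subset_iff]
    prec_meet M a := by simp only [okPrec, fst_foldr_okInf, Set.subset_iInter₂_iff]
    inv_inv x := Subtype.ext (Prod.ext (compl_compl _) (compl_compl _))
    exchange := okPrec_okInf_iff
    inv_sup x y := Subtype.ext (Prod.ext (Set.compl_union _ _) (Set.compl_union _ _))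
    inv_inf x y := Subtype.ext (Prod.ext (Set.compl_inter _ _) (Set.compl_inter _ _))
    prec_bot x y h := h.trans (fst_okInf_okInv_self y).subset }
end

section
/- Let X be a compact Hausdorff space and B the spil of pairs (O,K) with O open ⊆ K compact, with relation (O₀,K₀) ≺ (O₁,K₁) iff K₀ ⊆ O₁, involution (O,K)' = (X∖K, X∖O), and componentwise lattice operations. Then the map x ↦ F_x := {(O,K) ∈ B : x ∈ O} is a homeomorphism from X onto spec(B), the space of prime ≺-filters on B with the topology generated by the sets O_a = {F : a ∈ F}. -/
variable {X : Type*} [TopologicalSpace X] [CompactSpace X] [T2Space X]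

/-!
For `x : X`, the pairs `(O, K)` with `x ∈ O` form a prime `≺`-filter because compact
neighbourhoods form a base at `x`. Conversely, the compact parts of the members of a prime
`≺`-filter `F` are nonempty and directed downwards, so they share a point `x`. Then `F ⊆ F_x`
since `F = ↑F`; and `F_x ⊆ F` since, for `c ≺ a` with `x ∈ c.O`, the join `a ∨ c'` is the top
element, so primeness puts `a` or `c'` into `F`, and `c' ∉ F` because `x` lies outside the compact
part `X ∖ c.O` of `c'`. Finally the basic open set `O_a` pulls back to the open part of `a`, and
these open parts form a base of `X`.
-/

open TopologicalSpace Topology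

section

variable {Y : Type*} [TopologicalSpace Y]

theorem OKPair.eq_okBot_of_snd_eq_empty {a : OKPair Y} (h : a.1.2 = ∅) : a = okBot :=
  Subtype.ext (Prod.ext (Set.subset_empty_iff.1 (h ▸ a.2.2.2)) h)

theorem mem_fst_foldr_okSup {x : Y} (M : List (OKPair Y)) :
    x ∈ (M.foldr okSup okBot).1.1 ↔ ∃ a ∈ M, x ∈ a.1.1 := by
  induction M with
  | nil => simp [List.foldr, okBot]
  | cons a M ih => simp [okSup, ih]

theorem exists_okPair_mem_fst_subset [LocallyCompactSpace Y] {x : Y} {O : Set Y}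
    (hO : IsOpen O) (hx : x ∈ O) : ∃ a : OKPair Y, x ∈ a.1.1 ∧ a.1.2 ⊆ O := by
  obtain ⟨K, hK, hxK, hKO⟩ := exists_compact_subset hO hx
  exact ⟨⟨(interior K, K), isOpen_interior, hK, interior_subset⟩, hxK, hKO⟩

theorem isTopologicalBasis_range_okPair_fst [LocallyCompactSpace Y] :
    IsTopologicalBasis (Set.range fun a : OKPair Y => a.1.1) := by
  refine isTopologicalBasis_of_isOpen_of_nhds (by rintro _ ⟨a, rfl⟩; exact a.2.1) ?_
  intro x O hx hO
  obtain ⟨a, hxa, haO⟩ := exists_okPair_mem_fst_subset hO hx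
  exact ⟨a.1.1, ⟨a, rfl⟩, hxa, a.2.2.2.trans haO⟩

def pointFilter (x : Y) : Set (OKPair Y) := {p | x ∈ p.1.1}

theorem pointFilter_injective [T1Space Y] [LocallyCompactSpace Y] :
    Function.Injective (pointFilter (Y := Y)) := by
  intro x y hxy
  by_contra hne
  obtain ⟨a, hxa, hay⟩ := exists_okPair_mem_fst_subset isOpen_compl_singleton hne
  have hya : a ∈ pointFilter y := hxy ▸ hxa
  exact hay (a.2.2.2 hya) rfl

variable [T2Space Y]

theorem isPrimePrecFilter_pointFilter [LocallyCompactSpace Y] (x : Y) :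
    IsPrimePrecFilter okSup okInf okBot okPrec (pointFilter x) := by
  refine ⟨⟨?_, fun a ha b hb => ⟨ha, hb⟩, ?_⟩, fun M => (mem_fst_foldr_okSup M).1⟩
  · obtain ⟨a, hxa, -⟩ := exists_okPair_mem_fst_subset isOpen_univ (Set.mem_univ x)
    exact ⟨a, hxa⟩
  ext p
  refine ⟨fun hp => exists_okPair_mem_fst_subset p.2.1 hp, ?_⟩
  rintro ⟨a, hxa, hap⟩
  exact hap (a.2.2.2 hxa)

theorem IsPrecFilter.okTop_mem [CompactSpace Y] {F : Set (OKPair Y)}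
    (hF : IsPrecFilter okInf okPrec F) : okTop ∈ F := by
  obtain ⟨a, ha⟩ := hF.1
  rw [hF.2.2]
  exact ⟨a, ha, Set.subset_univ _⟩

theorem IsPrimePrecFilter.okBot_notMem {F : Set (OKPair Y)}
    (hF : IsPrimePrecFilter okSup okInf okBot okPrec F) : okBot ∉ F := fun h => by
  simpa using hF.2 [] h

theorem IsPrimePrecFilter.nonempty_iInter_snd {F : Set (OKPair Y)}
    (hF : IsPrimePrecFilter okSup okInf okBot okPrec F) :
    (⋂ a : F, (a : OKPair Y).1.2).Nonempty := by
  have : Nonempty F := hF.1.1.to_subtype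
  refine IsCompact.nonempty_iInter_of_directed_nonempty_isCompact_isClosed _ ?_ ?_
    (fun a => a.1.2.2.1) (fun a => a.1.2.2.1.isClosed)
  · intro a b
    exact ⟨⟨okInf a b, hF.1.2.1 _ a.2 _ b.2⟩, Set.inter_subset_left, Set.inter_subset_right⟩
  · rintro ⟨a, ha⟩
    exact Set.nonempty_iff_ne_empty.2 fun h =>
      hF.okBot_notMem (OKPair.eq_okBot_of_snd_eq_empty h ▸ ha)

theorem foldr_okSup_okInv_eq_okTop [CompactSpace Y] {a c : OKPair Y} (h : okPrec c a) :
    [a, okInv c].foldr okSup okBot = okTop := by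
  have hO : a.1.1 ∪ c.1.2ᶜ = Set.univ :=
    Set.eq_univ_of_forall fun y => (em (y ∈ c.1.2)).imp (@h y) id
  have hK : a.1.2 ∪ c.1.1ᶜ = Set.univ :=
    Set.eq_univ_of_univ_subset <|
      hO ▸ Set.union_subset_union a.2.2.2 (Set.compl_subset_compl.2 c.2.2.2)
  exact Subtype.ext (Prod.ext (by simpa [List.foldr, okSup, okInv, okBot, okTop] using hO)
    (by simpa [List.foldr, okSup, okInv, okBot, okTop] using hK))

theorem IsPrimePrecFilter.eq_pointFilter [CompactSpace Y] {F : Set (OKPair Y)}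
    (hF : IsPrimePrecFilter okSup okInf okBot okPrec F) {x : Y} (hx : ∀ a ∈ F, x ∈ a.1.2) :
    F = pointFilter x := by
  refine Set.Subset.antisymm (fun p hp => ?_) (fun p hp => ?_)
  · obtain ⟨a, ha, hap⟩ : p ∈ upSet okPrec F := hF.1.2.2 ▸ hp
    exact hap (hx a ha)
  · obtain ⟨a, hxa, hap⟩ := exists_okPair_mem_fst_subset p.2.1 hp
    obtain ⟨c, hxc, hca⟩ := exists_okPair_mem_fst_subset a.2.1 hxa
    obtain ⟨b, hb, hbF⟩ := hF.2 _ (foldr_okSup_okInv_eq_okTop hca ▸ hF.1.okTop_mem)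
    have haF : a ∈ F := by
      simp only [List.mem_cons, List.not_mem_nil, or_false] at hb
      rcases hb with rfl | rfl
      · exact hbF
      · exact absurd hxc (hx _ hbF)
    rw [hF.1.2.2]
    exact ⟨a, haF, hap⟩

theorem IsPrimePrecFilter.exists_eq_pointFilter [CompactSpace Y]
    {F : Set (OKPair Y)} (hF : IsPrimePrecFilter okSup okInf okBot okPrec F) :
    ∃ x : Y, F = pointFilter x := by
  obtain ⟨x, hx⟩ := hF.nonempty_iInter_snd
  exact ⟨x, hF.eq_pointFilter fun a ha => Set.mem_iInter.1 hx ⟨a, ha⟩⟩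

variable (Y) in
abbrev OKSpec : Type _ := {F : Set (OKPair Y) // IsPrimePrecFilter okSup okInf okBot okPrec F}

instance OKSpec.instTopologicalSpace : TopologicalSpace (OKSpec Y) :=
  generateFrom {S | ∃ a : OKPair Y, S = {F : OKSpec Y | a ∈ F.1}}

def toOKSpec [LocallyCompactSpace Y] (x : Y) : OKSpec Y :=
  ⟨pointFilter x, isPrimePrecFilter_pointFilter x⟩

theorem bijective_toOKSpec [CompactSpace Y] :
    Function.Bijective (toOKSpec (Y := Y)) := by
  refine ⟨fun x y h => pointFilter_injective (congrArg Subtype.val h), fun F => ?_⟩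
  obtain ⟨x, hx⟩ := F.2.exists_eq_pointFilter
  exact ⟨x, Subtype.ext hx.symm⟩

theorem isInducing_toOKSpec [LocallyCompactSpace Y] : IsInducing (toOKSpec (Y := Y)) := by
  refine ⟨isTopologicalBasis_range_okPair_fst.eq_generateFrom.trans ?_⟩
  rw [OKSpec.instTopologicalSpace, induced_generateFrom_eq]
  congr 1
  ext U
  simp [toOKSpec, pointFilter, eq_comm]

end

theorem stmt17 :
    ∃ g : @Homeomorph X
        {F : Set (OKPair X) // IsPrimePrecFilter okSup okInf okBot okPrec F}
        _
        (TopologicalSpace.generateFrom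
          {S | ∃ a : OKPair X,
            S = {F : {F : Set (OKPair X) // IsPrimePrecFilter okSup okInf okBot okPrec F} |
                  a ∈ F.1}}),
      ∀ x : X, (g x).1 = {p : OKPair X | x ∈ p.1.1} := by
  exact ⟨(Equiv.ofBijective _ bijective_toOKSpec).toHomeomorphOfIsInducing isInducing_toOKSpec,
    fun _ => rfl⟩
end

section
/- Every spil satisfies: for all a, x, y, if x ∧ y ≺ a then there exist x⁺, y⁺ with x ≺ x⁺, y ≺ y⁺ and x⁺ ∧ y⁺ ≺ a. -/
variable {B : Type*} {sup inf : B → B → B} {inv : B → B} {bot top : B}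
  {prec : B → B → Prop}

theorem stmt18 (h : IsSpil sup inf inv bot top prec) (a x y : B)
    (hxy : prec (inf x y) a) :
    ∃ xp yp : B, prec x xp ∧ prec y yp ∧ prec (inf xp yp) a := by
  rw [h.exchange] at hxy
  obtain ⟨b, hxb, hb⟩ := h.prec_interpolate _ _ hxy
  rw [← h.exchange] at hb
  rw [h.inf_comm, h.exchange] at hb
  obtain ⟨c, hyc, hc⟩ := h.prec_interpolate _ _ hb
  rw [← h.exchange, h.inf_comm] at hc
  exact ⟨b, c, hxb, hyc, hc⟩
end

section
/- Let 𝔄 be a Boolean algebra and L a sublattice of 𝔄 containing 0 and 1, and let L^c = {-a : a ∈ L}, where L satisfies the normality condition: for all a,b ∈ L with a·b = 0 there are c,d ∈ L^c with a ≤ c, b ≤ d, c·d = 0. Define B = {(u,k) : u ∈ L^c, k ∈ L, u ≤ k} with (u,k)∧(v,h)=(u·v, k·h), (u,k)∨(v,h)=(u+v, k+h), (u,k)'=(-k,-u), (u,k) ≺ (v,h) iff k ≤ v, 0=(0,0), 1=(1,1). Then B is a spil. -/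
theorem stmt19 {A : Type*} [BooleanAlgebra A] (L : Set A)
    (h0 : (⊥ : A) ∈ L) (h1 : (⊤ : A) ∈ L)
    (hsup : ∀ a ∈ L, ∀ b ∈ L, a ⊔ b ∈ L)
    (hinf : ∀ a ∈ L, ∀ b ∈ L, a ⊓ b ∈ L)
    (hnorm : ∀ a ∈ L, ∀ b ∈ L, a ⊓ b = ⊥ →
      ∃ c d : A, cᶜ ∈ L ∧ dᶜ ∈ L ∧ a ≤ c ∧ b ≤ d ∧ c ⊓ d = ⊥) :
    IsSpil (B := {p : A × A // p.1ᶜ ∈ L ∧ p.2 ∈ L ∧ p.1 ≤ p.2})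
      (fun p q => ⟨(p.1.1 ⊔ q.1.1, p.1.2 ⊔ q.1.2), by
        refine ⟨?_, hsup _ p.2.2.1 _ q.2.2.1, sup_le_sup p.2.2.2 q.2.2.2⟩
        rw [compl_sup]; exact hinf _ p.2.1 _ q.2.1⟩)
      (fun p q => ⟨(p.1.1 ⊓ q.1.1, p.1.2 ⊓ q.1.2), by
        refine ⟨?_, hinf _ p.2.2.1 _ q.2.2.1, inf_le_inf p.2.2.2 q.2.2.2⟩
        rw [compl_inf]; exact hsup _ p.2.1 _ q.2.1⟩)
      (fun p => ⟨(p.1.2ᶜ, p.1.1ᶜ), by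
        refine ⟨?_, p.2.1, compl_le_compl p.2.2.2⟩
        rw [compl_compl]; exact p.2.2.1⟩)
      ⟨(⊥, ⊥), by simpa using ⟨h1, h0⟩⟩
      ⟨(⊤, ⊤), by simpa using ⟨h0, h1⟩⟩
      (fun p q => p.1.2 ≤ q.1.1) := by
  constructor
  · intro a b; exact Subtype.ext (Prod.ext (sup_comm _ _) (sup_comm _ _))
  · intro a b c; exact Subtype.ext (Prod.ext (sup_assoc _ _ _) (sup_assoc _ _ _))
  · intro a b; exact Subtype.ext (Prod.ext (inf_comm _ _) (inf_comm _ _))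
  · intro a b c; exact Subtype.ext (Prod.ext (inf_assoc _ _ _) (inf_assoc _ _ _))
  · intro a b; exact Subtype.ext (Prod.ext sup_inf_self sup_inf_self)
  · intro a b; exact Subtype.ext (Prod.ext inf_sup_self inf_sup_self)
  · intro a b c; exact Subtype.ext (Prod.ext (inf_sup_left _ _ _) (inf_sup_left _ _ _))
  · intro a; exact Subtype.ext (Prod.ext (bot_sup_eq _) (bot_sup_eq _))
  · intro a; exact Subtype.ext (Prod.ext (top_inf_eq _) (top_inf_eq _))
  · intro a b c hab hbc
    exact le_trans hab (le_trans b.2.2.2 hbc)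
  · intro a c hac
    obtain ⟨x, d, hx, hd, hle1, hle2, hxd⟩ := hnorm a.1.2 a.2.2.1 c.1.1ᶜ c.2.1
      (le_bot_iff.mp (le_trans (inf_le_inf_right _ hac) (by simp)))
    refine ⟨⟨(x, dᶜ), hx, hd, ?_⟩, hle1, ?_⟩
    · exact le_compl_iff_disjoint_right.mpr (disjoint_iff.mpr hxd)
    · simpa using compl_le_compl hle2
  · intro M a
    induction M with
    | nil => simp
    | cons m M ih =>
      simp only [List.foldr_cons, List.mem_cons]
      constructor
      · intro h
        exact sup_le (h m (Or.inl rfl)) (ih.mp fun x hx => h x (Or.inr hx))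
      · rintro h x (rfl | hx)
        · exact le_trans le_sup_left h
        · exact ih.mpr (le_trans le_sup_right h) x hx
  · intro M a
    induction M with
    | nil => simp
    | cons m M ih =>
      simp only [List.foldr_cons, List.mem_cons]
      constructor
      · intro h
        exact le_inf (h m (Or.inl rfl)) (ih.mp fun x hx => h x (Or.inr hx))
      · rintro h x (rfl | hx)
        · exact le_trans h inf_le_left
        · exact ih.mpr (le_trans h inf_le_right) x hx
  · intro x; exact Subtype.ext (Prod.ext (compl_compl _) (compl_compl _))
  · intro x y z
    constructor
    · intro h
      calc x.1.2 = (x.1.2 ⊓ y.1.2) ⊔ (x.1.2 ⊓ y.1.2ᶜ) := by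
            rw [← inf_sup_left]; simp
        _ ≤ z.1.1 ⊔ y.1.2ᶜ := sup_le_sup h inf_le_right
    · intro h
      calc x.1.2 ⊓ y.1.2 ≤ (z.1.1 ⊔ y.1.2ᶜ) ⊓ y.1.2 := inf_le_inf_right _ h
        _ ≤ z.1.1 := by rw [inf_sup_right]; simp
  · intro x y; exact Subtype.ext (Prod.ext compl_sup compl_sup)
  · intro x y; exact Subtype.ext (Prod.ext compl_inf compl_inf)
  · intro x y h
    exact le_trans h (le_trans (inf_le_inf_right _ y.2.2.2) (by simp))
end
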